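/- Let S₀ be the cotangent lift of the inversion of ℝ³∖{0} with pole O and ratio l > 0, given by p = l·OM/‖OM‖², r = (‖OM‖²/l) W − (2 (W·OM)/l) OM. Then S₀ is an involution (applying the same formulas to (OM,W) ↦ (p,r) and again recovers (OM,W)), and the Kepler energy transforms as E ∘ S₀ = (l²/(2m‖W‖‖OM‖²))(‖W‖ − 2m²k/l). In particular E(r,p) = 0 if and only if ‖W‖ = 2km²/l. -/

import Mathlib

/-!
The inversion `x ↦ (l/‖x‖²) x` maps norms by `‖x‖ ↦ l/‖x‖`, and its cotangent lift sends `w` to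
`‖x‖²/l` times the reflection of `w` in the hyperplane `x^⊥`. Hence `‖r‖ = ‖x‖²‖w‖/l` and
`⟪r, p⟫ = -⟪w, x⟫`; with these three identities both the involution property and the energy
formula become identities between rational functions of `‖x‖`, `‖w‖` and `⟪w, x⟫`.
-/

variable {E : Type*} [NormedAddCommGroup E] [InnerProductSpace ℝ E]

/-- Inversion with pole `0` and ratio `l` (so `l = R²` for the sphere of radius `R`). -/
noncomputable def sphereInversion (l : ℝ) (x : E) : E := (l / ‖x‖ ^ 2) • x

/-- The momentum component of the cotangent lift of `sphereInversion l` at the point `x`. -/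
noncomputable def sphereInversionLift (l : ℝ) (x w : E) : E :=
  (‖x‖ ^ 2 / l) • w - (2 * inner ℝ w x / l) • x

noncomputable def keplerEnergy (m k : ℝ) (r p : E) : ℝ := ‖p‖ ^ 2 / (2 * m) - m * k / ‖r‖

variable {l : ℝ} {x w : E}

theorem norm_sq_sphereInversion (l : ℝ) (x : E) :
    ‖sphereInversion l x‖ ^ 2 = l ^ 2 / ‖x‖ ^ 2 := by
  rcases eq_or_ne x 0 with rfl | hx
  · simp [sphereInversion]
  have hx' : ‖x‖ ≠ 0 := norm_ne_zero_iff.mpr hx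
  rw [sphereInversion, norm_smul, mul_pow, Real.norm_eq_abs, sq_abs]
  field_simp

theorem norm_sphereInversion (hl : 0 ≤ l) (x : E) : ‖sphereInversion l x‖ = l / ‖x‖ := by
  rw [← sq_eq_sq₀ (norm_nonneg _) (by positivity), norm_sq_sphereInversion, div_pow]

theorem sphereInversion_sphereInversion (hl : l ≠ 0) (x : E) :
    sphereInversion l (sphereInversion l x) = x := by
  rcases eq_or_ne x 0 with rfl | hx
  · simp [sphereInversion]
  have hx' : ‖x‖ ≠ 0 := norm_ne_zero_iff.mpr hx
  rw [sphereInversion, norm_sq_sphereInversion, sphereInversion, smul_smul]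
  convert one_smul ℝ x using 2
  field_simp

-- `sphereInversionLift l x` is `‖x‖²/l` times a reflection, which preserves the norm.
theorem norm_sq_sphereInversionLift (hl : l ≠ 0) (x w : E) :
    ‖sphereInversionLift l x w‖ ^ 2 = (‖x‖ ^ 2 * ‖w‖ / l) ^ 2 := by
  rw [sphereInversionLift, norm_sub_sq_real, norm_smul, norm_smul, real_inner_smul_left,
    real_inner_smul_right, Real.norm_eq_abs, Real.norm_eq_abs, mul_pow, mul_pow, sq_abs, sq_abs]
  field_simp
  ring

theorem norm_sphereInversionLift (hl : 0 < l) (x w : E) :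
    ‖sphereInversionLift l x w‖ = ‖x‖ ^ 2 * ‖w‖ / l :=
  (sq_eq_sq₀ (norm_nonneg _) (by positivity)).mp (norm_sq_sphereInversionLift hl.ne' x w)

theorem inner_sphereInversionLift_sphereInversion (hl : l ≠ 0) (x w : E) :
    inner ℝ (sphereInversionLift l x w) (sphereInversion l x) = -inner ℝ w x := by
  rcases eq_or_ne x 0 with rfl | hx
  · simp [sphereInversion]
  have hx' : ‖x‖ ≠ 0 := norm_ne_zero_iff.mpr hx
  rw [sphereInversionLift, sphereInversion, inner_sub_left, real_inner_smul_left,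
    real_inner_smul_left, real_inner_smul_right, real_inner_smul_right,
    real_inner_self_eq_norm_sq]
  field_simp
  ring

theorem sphereInversionLift_sphereInversionLift (hl : l ≠ 0) (hx : x ≠ 0) (w : E) :
    sphereInversionLift l (sphereInversion l x) (sphereInversionLift l x w) = w := by
  have hx' : ‖x‖ ≠ 0 := norm_ne_zero_iff.mpr hx
  rw [sphereInversionLift, norm_sq_sphereInversion, inner_sphereInversionLift_sphereInversion hl,
    sphereInversionLift, sphereInversion]
  match_scalars
  · field_simp
  · field_simp
    ring

theorem keplerEnergy_sphereInversion (m k : ℝ) (hm : m ≠ 0) (hl : 0 < l) (hx : x ≠ 0)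
    (hw : w ≠ 0) :
    keplerEnergy m k (sphereInversionLift l x w) (sphereInversion l x) =
      l ^ 2 / (2 * m * ‖w‖ * ‖x‖ ^ 2) * (‖w‖ - 2 * m ^ 2 * k / l) := by
  have hx' : ‖x‖ ≠ 0 := norm_ne_zero_iff.mpr hx
  have hw' : ‖w‖ ≠ 0 := norm_ne_zero_iff.mpr hw
  rw [keplerEnergy, norm_sphereInversion hl.le, norm_sphereInversionLift hl]
  field_simp

theorem keplerEnergy_sphereInversion_eq_zero_iff (m k : ℝ) (hm : m ≠ 0) (hl : 0 < l)
    (hx : x ≠ 0) (hw : w ≠ 0) :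
    keplerEnergy m k (sphereInversionLift l x w) (sphereInversion l x) = 0 ↔
      ‖w‖ = 2 * k * m ^ 2 / l := by
  have hfactor : l ^ 2 / (2 * m * ‖w‖ * ‖x‖ ^ 2) ≠ 0 := by
    have := norm_ne_zero_iff.mpr hx
    have := norm_ne_zero_iff.mpr hw
    have := hl.ne'
    positivity
  rw [keplerEnergy_sphereInversion m k hm hl hx hw, mul_eq_zero, or_iff_right hfactor,
    sub_eq_zero]
  ring_nf

theorem kepler_inversion_lift_involution_and_energy_general
    (m k l : ℝ) (hm : 0 < m) (hl : 0 < l)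
    (OM W : EuclideanSpace ℝ (Fin 3)) (hOM : OM ≠ 0) (hW : W ≠ 0) :
    ∀ p r : EuclideanSpace ℝ (Fin 3),
      p = (l / ‖OM‖ ^ 2) • OM →
      r = (‖OM‖ ^ 2 / l) • W - (2 * (inner ℝ W OM : ℝ) / l) • OM →
      -- `S₀` is an involution: applying the same formulas to `(p, r)` recovers `(OM, W)`
      ((l / ‖p‖ ^ 2) • p = OM ∧
       (‖p‖ ^ 2 / l) • r - (2 * (inner ℝ r p : ℝ) / l) • p = W) ∧
      -- transformed Hamiltonian
      (‖p‖ ^ 2 / (2 * m) - m * k / ‖r‖ =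
        l ^ 2 / (2 * m * ‖W‖ * ‖OM‖ ^ 2) * (‖W‖ - 2 * m ^ 2 * k / l)) ∧
      -- zero-energy characterization
      (‖p‖ ^ 2 / (2 * m) - m * k / ‖r‖ = 0 ↔ ‖W‖ = 2 * k * m ^ 2 / l) := by
  rintro p r rfl rfl
  exact ⟨⟨sphereInversion_sphereInversion hl.ne' OM,
      sphereInversionLift_sphereInversionLift hl.ne' hOM W⟩,
    keplerEnergy_sphereInversion m k hm.ne' hl hOM hW,
    keplerEnergy_sphereInversion_eq_zero_iff m k hm.ne' hl hOM hW⟩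

/-- The cotangent lift `S₀` of the inversion of `ℝ³∖{0}` with pole `O`
and ratio `l`, given by `p = l·OM/‖OM‖²`, `r = (‖OM‖²/l) W - (2(W·OM)/l) OM`,
is an involution, and the Kepler energy transforms as
`E ∘ S₀ = (l²/(2m‖W‖‖OM‖²))(‖W‖ - 2m²k/l)`; in particular
`E(r,p) = 0 ↔ ‖W‖ = 2km²/l`. -/
theorem kepler_inversion_lift_involution_and_energy
    (m k l : ℝ) (hm : 0 < m) (hk : 0 < k) (hl : 0 < l)
    (OM W : EuclideanSpace ℝ (Fin 3)) (hOM : OM ≠ 0) (hW : W ≠ 0) :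
    ∀ p r : EuclideanSpace ℝ (Fin 3),
      p = (l / ‖OM‖ ^ 2) • OM →
      r = (‖OM‖ ^ 2 / l) • W - (2 * (inner ℝ W OM : ℝ) / l) • OM →
      -- `S₀` is an involution: applying the same formulas to `(p, r)` recovers `(OM, W)`
      ((l / ‖p‖ ^ 2) • p = OM ∧
       (‖p‖ ^ 2 / l) • r - (2 * (inner ℝ r p : ℝ) / l) • p = W) ∧
      -- transformed Hamiltonian
      (‖p‖ ^ 2 / (2 * m) - m * k / ‖r‖ =
        l ^ 2 / (2 * m * ‖W‖ * ‖OM‖ ^ 2) * (‖W‖ - 2 * m ^ 2 * k / l)) ∧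
      -- zero-energy characterization
      (‖p‖ ^ 2 / (2 * m) - m * k / ‖r‖ = 0 ↔ ‖W‖ = 2 * k * m ^ 2 / l) :=
  kepler_inversion_lift_involution_and_energy_general m k l hm hl OM W hOM hW
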